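/- arXiv:1711.02591 — 3 statements merged into one kernel-verified Lean document; each statement's English description precedes it below -/
import Mathlib

section
/- Under Assumption (0 < τ < 2/‖A*A‖), the iterates x^{k+1} = J_τ ∘ G_τ(x^k) satisfy the Fejér-type inequality: for any minimizer x* of φ₁ + φ₂ and any k ≥ 0, ‖x^{k+1} − x*‖² ≤ ‖x^k − x*‖² − Σ_{j∈[N]} ‖P_τ(G_τ(x^k)_j) − P_τ(G_τ(x*)_j)‖₂², where P_τ is the metric projection of ℓ²(Ω) onto the ball B(0,τ). -/
/-!
Soft thresholding is the proximal map of `τ ‖·‖`, so row-wise soft thresholding `J_τ` is the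
proximal map of `τ φ₁` on `ℓ²(Ω)^N`. The optimality condition of `x*` says that
`A*(u - A x*)` is a subgradient of `φ₁` at `x*`, which is exactly `x* = J_τ (G_τ x*)`.
Proximal maps are firmly nonexpansive,
`‖J a - J b‖² + ‖(a - J a) - (b - J b)‖² ≤ ‖a - b‖²`, and `a - J_τ a` is the row-wise
projection `P_τ a` onto the ball of radius `τ`. Apply this to `a = G_τ x^k`, `b = G_τ x*` and
conclude with `G_τ x^k - G_τ x* = (I - τ A*A)(x^k - x*)`, where `I - τ A*A` is nonexpansive
because `τ ‖A*A‖ < 2`.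
-/

open scoped InnerProductSpace InnerProduct
open Filter Topology

variable {H0 K : Type*} [NormedAddCommGroup H0] [InnerProductSpace ℝ H0] [CompleteSpace H0]
  [NormedAddCommGroup K] [InnerProductSpace ℝ K] [CompleteSpace K]

instance {N : ℕ} : CompleteSpace (PiLp 2 (fun _ : Fin N => H0)) :=
  inferInstance

section Prox

variable {E : Type*} [NormedAddCommGroup E] [InnerProductSpace ℝ E]

-- The three-point inequality characterising `p = prox_f a` for convex `f`.
def IsProx (f : E → ℝ) (a p : E) : Prop :=
  ∀ z, f p + ‖p - a‖ ^ 2 / 2 + ‖z - p‖ ^ 2 / 2 ≤ f z + ‖z - a‖ ^ 2 / 2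

theorem isProx_of_inner_le {f : E → ℝ} {a p : E} (h : ∀ z, ⟪a - p, z - p⟫_ℝ ≤ f z - f p) :
    IsProx f a p := by
  intro z
  have hexp : ‖z - a‖ ^ 2 = ‖z - p‖ ^ 2 - 2 * ⟪a - p, z - p⟫_ℝ + ‖p - a‖ ^ 2 := by
    rw [show z - a = (z - p) - (a - p) by abel, norm_sub_sq_real, real_inner_comm,
      norm_sub_rev a p]
  linarith [h z]

theorem IsProx.norm_sub_sq_add_norm_sub_sq_le {f : E → ℝ} {a b p q : E} (hp : IsProx f a p)
    (hq : IsProx f b q) : ‖p - q‖ ^ 2 + ‖(a - p) - (b - q)‖ ^ 2 ≤ ‖a - b‖ ^ 2 := by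
  have hqa : ‖q - a‖ ^ 2 = ‖p - q‖ ^ 2 + 2 * ⟪p - q, a - p⟫_ℝ + ‖a - p‖ ^ 2 := by
    rw [show q - a = -((p - q) + (a - p)) by abel, norm_neg, norm_add_sq_real]
  have hpb : ‖p - b‖ ^ 2 = ‖p - q‖ ^ 2 - 2 * ⟪p - q, b - q⟫_ℝ + ‖b - q‖ ^ 2 := by
    rw [show p - b = (p - q) - (b - q) by abel, norm_sub_sq_real]
  have hab : ‖a - b‖ ^ 2 =
      ‖p - q‖ ^ 2 + 2 * ⟪p - q, (a - p) - (b - q)⟫_ℝ + ‖(a - p) - (b - q)‖ ^ 2 := by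
    rw [show a - b = (p - q) + ((a - p) - (b - q)) by abel, norm_add_sq_real]
  rw [inner_sub_right] at hab
  have h₁ := hp q
  have h₂ := hq p
  rw [norm_sub_rev p a, norm_sub_rev q p] at h₁
  rw [norm_sub_rev q b] at h₂
  nlinarith [sq_nonneg ‖p - q‖]

theorem IsProx.unique {f : E → ℝ} {a p q : E} (hp : IsProx f a p) (hq : IsProx f a q) :
    p = q := by
  have h := hp.norm_sub_sq_add_norm_sub_sq_le hq
  rw [sub_self, norm_zero] at h
  rw [← sub_eq_zero, ← norm_eq_zero]
  nlinarith [norm_nonneg (p - q), sq_nonneg ‖(a - p) - (a - q)‖]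

theorem IsProx.piLp {ι : Type*} [Fintype ι] {E : ι → Type*} [∀ i, NormedAddCommGroup (E i)]
    [∀ i, InnerProductSpace ℝ (E i)] {f : ∀ i, E i → ℝ} {a p : PiLp 2 E}
    (h : ∀ i, IsProx (f i) (a i) (p i)) : IsProx (fun y : PiLp 2 E => ∑ i, f i (y i)) a p := by
  intro z
  simp only [PiLp.norm_sq_eq_of_L2, PiLp.sub_apply, Finset.sum_div, ← Finset.sum_add_distrib]
  exact Finset.sum_le_sum fun i _ => h i (z i)

end Prox

section SoftThreshold

variable {E : Type*} [NormedAddCommGroup E] [InnerProductSpace ℝ E]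

noncomputable def softThreshold (τ : ℝ) (w : E) : E := (max (‖w‖ - τ) 0 / ‖w‖) • w

theorem softThreshold_of_norm_le {τ : ℝ} {w : E} (h : ‖w‖ ≤ τ) : softThreshold τ w = 0 := by
  simp [softThreshold, max_eq_right (sub_nonpos.2 h)]

theorem softThreshold_of_lt_norm {τ : ℝ} {w : E} (h : τ < ‖w‖) :
    softThreshold τ w = (1 - τ / ‖w‖) • w := by
  rcases eq_or_ne w 0 with rfl | hw
  · simp [softThreshold]
  rw [softThreshold, max_eq_left (sub_nonneg.2 h.le), sub_div, div_self (norm_ne_zero_iff.2 hw)]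

theorem sub_softThreshold (τ : ℝ) (w : E) :
    w - softThreshold τ w = if ‖w‖ ≤ τ then w else (τ / ‖w‖) • w := by
  split_ifs with h
  · rw [softThreshold_of_norm_le h, sub_zero]
  · rw [softThreshold_of_lt_norm (not_le.1 h), sub_smul, one_smul, sub_sub_cancel]

theorem norm_sub_softThreshold_le {τ : ℝ} (hτ : 0 ≤ τ) (w : E) : ‖w - softThreshold τ w‖ ≤ τ := by
  rw [sub_softThreshold]
  split_ifs with h
  · exact h
  · rw [norm_smul, Real.norm_of_nonneg (by positivity), div_mul_cancel₀]
    exact (hτ.trans_lt (not_le.1 h)).ne'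

theorem inner_sub_softThreshold_self (τ : ℝ) (w : E) :
    ⟪w - softThreshold τ w, softThreshold τ w⟫_ℝ = τ * ‖softThreshold τ w‖ := by
  rcases le_or_gt ‖w‖ τ with h | h
  · simp [softThreshold_of_norm_le h]
  rcases eq_or_ne w 0 with rfl | hw
  · simp [softThreshold]
  have hw' : 0 < ‖w‖ := norm_pos_iff.2 hw
  rw [sub_softThreshold, if_neg (not_le.2 h), softThreshold_of_lt_norm h, inner_smul_left,
    inner_smul_right, real_inner_self_eq_norm_sq, norm_smul,
    Real.norm_of_nonneg (sub_nonneg.2 ((div_le_one hw').2 h.le)), conj_trivial]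
  field_simp

theorem isProx_softThreshold {τ : ℝ} (hτ : 0 ≤ τ) (w : E) :
    IsProx (fun z => τ * ‖z‖) w (softThreshold τ w) := by
  refine isProx_of_inner_le fun z => ?_
  have hz : ⟪w - softThreshold τ w, z⟫_ℝ ≤ τ * ‖z‖ :=
    (real_inner_le_norm _ _).trans
      (mul_le_mul_of_nonneg_right (norm_sub_softThreshold_le hτ w) (norm_nonneg z))
  rw [inner_sub_right, inner_sub_softThreshold_self]
  linarith

end SoftThreshold

theorem convexOn_piLp_sum {p : ENNReal} [Fact (1 ≤ p)] {ι : Type*} [Fintype ι] {E : ι → Type*}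
    [∀ i, SeminormedAddCommGroup (E i)] [∀ i, NormedSpace ℝ (E i)] {f : ∀ i, E i → ℝ}
    (hf : ∀ i, ConvexOn ℝ Set.univ (f i)) :
    ConvexOn ℝ Set.univ (fun y : PiLp p E => ∑ i, f i (y i)) := by
  refine ⟨convex_univ, fun x _ y _ a b ha hb hab => ?_⟩
  simp only [smul_eq_mul, Finset.mul_sum, ← Finset.sum_add_distrib, PiLp.add_apply,
    PiLp.smul_apply]
  exact Finset.sum_le_sum fun i _ => (hf i).2 trivial trivial ha hb hab

theorem nonneg_of_forall_nonneg_add_mul {D C : ℝ} (h : ∀ t : ℝ, 0 < t → t ≤ 1 → 0 ≤ D + t * C) :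
    0 ≤ D := by
  have hlim : Tendsto (fun t : ℝ => D + t * C) (𝓝[>] 0) (𝓝 (D + 0 * C)) :=
    ((continuous_const.add (continuous_id.mul continuous_const)).tendsto 0).mono_left
      nhdsWithin_le_nhds
  simpa using ge_of_tendsto hlim (by
    filter_upwards [Ioc_mem_nhdsGT one_pos] with t ht using h t ht.1 ht.2)

section LeastSquares

variable {E F : Type*} [NormedAddCommGroup E] [InnerProductSpace ℝ E] [CompleteSpace E]
  [NormedAddCommGroup F] [InnerProductSpace ℝ F] [CompleteSpace F]

theorem norm_sub_smul_adjoint_comp_self_apply_le (A : E →L[ℝ] F) {τ : ℝ} (hτ0 : 0 ≤ τ)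
    (hτ : τ * ‖A† ∘L A‖ ≤ 2) (v : E) : ‖v - τ • (A† ∘L A) v‖ ≤ ‖v‖ := by
  have hinner : ⟪v, (A† ∘L A) v⟫_ℝ = ‖A v‖ ^ 2 := by
    rw [ContinuousLinearMap.comp_apply, ContinuousLinearMap.adjoint_inner_right,
      real_inner_self_eq_norm_sq]
  have hbound : ‖(A† ∘L A) v‖ ≤ ‖A‖ * ‖A v‖ := by
    rw [ContinuousLinearMap.comp_apply,
      ← LinearIsometryEquiv.norm_map ContinuousLinearMap.adjoint A]
    exact ContinuousLinearMap.le_opNorm _ _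
  rw [ContinuousLinearMap.norm_adjoint_comp_self] at hτ
  have hsq : ‖v - τ • (A† ∘L A) v‖ ^ 2 ≤ ‖v‖ ^ 2 := by
    rw [norm_sub_sq_real, real_inner_smul_right, hinner, norm_smul, Real.norm_of_nonneg hτ0]
    have hτB : (τ * ‖(A† ∘L A) v‖) ^ 2 ≤ 2 * (τ * ‖A v‖ ^ 2) :=
      calc (τ * ‖(A† ∘L A) v‖) ^ 2 ≤ (τ * (‖A‖ * ‖A v‖)) ^ 2 := by gcongr
        _ = τ * (‖A‖ * ‖A‖) * (τ * ‖A v‖ ^ 2) := by ring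
        _ ≤ 2 * (τ * ‖A v‖ ^ 2) := by gcongr
    linarith
  exact (pow_le_pow_iff_left₀ (norm_nonneg _) (norm_nonneg _) two_ne_zero).1 hsq

theorem inner_adjoint_residual_le_of_forall_le (A : E →L[ℝ] F) (u : F) {f : E → ℝ}
    (hf : ConvexOn ℝ Set.univ f) {x : E}
    (hmin : ∀ y, f x + ‖A x - u‖ ^ 2 / 2 ≤ f y + ‖A y - u‖ ^ 2 / 2) (z : E) :
    ⟪(A†) (u - A x), z - x⟫_ℝ ≤ f z - f x := by
  have hadj : ⟪(A†) (u - A x), z - x⟫_ℝ = -⟪A x - u, A (z - x)⟫_ℝ := by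
    rw [ContinuousLinearMap.adjoint_inner_left, ← neg_sub, inner_neg_left]
  rw [hadj, neg_le_iff_add_nonneg']
  have hsmall : ∀ t : ℝ, 0 < t → t ≤ 1 →
      0 ≤ f z - f x + ⟪A x - u, A (z - x)⟫_ℝ + t * (‖A (z - x)‖ ^ 2 / 2) := by
    intro t ht0 ht1
    have hconv : f (x + t • (z - x)) ≤ (1 - t) * f x + t * f z := by
      have := hf.2 (Set.mem_univ x) (Set.mem_univ z) (sub_nonneg.2 ht1) ht0.le
        (sub_add_cancel 1 t)
      rwa [show (1 - t) • x + t • z = x + t • (z - x) by module] at this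
    have hquad : ‖A (x + t • (z - x)) - u‖ ^ 2 =
        ‖A x - u‖ ^ 2 + 2 * (t * ⟪A x - u, A (z - x)⟫_ℝ) + t ^ 2 * ‖A (z - x)‖ ^ 2 := by
      rw [map_add, map_smul, show A x + t • A (z - x) - u = (A x - u) + t • A (z - x) by abel,
        norm_add_sq_real, real_inner_smul_right, norm_smul, Real.norm_of_nonneg ht0.le, mul_pow]
    have := hmin (x + t • (z - x))
    refine nonneg_of_mul_nonneg_right ?_ ht0
    linarith
  linarith [nonneg_of_forall_nonneg_add_mul hsmall]

end LeastSquares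

/-- Fejér-type inequality for forward–backward iterates: for any minimizer `x*`,
`‖x^{k+1} - x*‖² ≤ ‖x^k - x*‖² - Σ_j ‖P_τ(G_τ(x^k)_j) - P_τ(G_τ(x*)_j)‖²`. -/
theorem stmt_9 {N : ℕ} (A : PiLp 2 (fun _ : Fin N => H0) →L[ℝ] K) (u : K)
    (τ : ℝ) (hτ0 : 0 < τ) (hτ2 : τ * ‖(ContinuousLinearMap.adjoint A).comp A‖ < 2)
    (xs : PiLp 2 (fun _ : Fin N => H0))
    (hmin : ∀ y : PiLp 2 (fun _ : Fin N => H0),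
      (∑ j, ‖xs j‖) + ‖A xs - u‖ ^ 2 / 2 ≤ (∑ j, ‖y j‖) + ‖A y - u‖ ^ 2 / 2)
    (G : PiLp 2 (fun _ : Fin N => H0) → PiLp 2 (fun _ : Fin N => H0))
    (hG : ∀ y, G y = y - τ • (ContinuousLinearMap.adjoint A) (A y - u))
    (P : H0 → H0)
    (hP : ∀ z : H0, P z = if ‖z‖ ≤ τ then z else (τ / ‖z‖) • z)
    (x : ℕ → PiLp 2 (fun _ : Fin N => H0))
    (hiter : ∀ (k : ℕ) (j : Fin N),
      x (k + 1) j = (max (‖G (x k) j‖ - τ) 0 / ‖G (x k) j‖) • G (x k) j) :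
    ∀ k : ℕ, ‖x (k + 1) - xs‖ ^ 2 ≤
      ‖x k - xs‖ ^ 2 - ∑ j, ‖P (G (x k) j) - P (G xs j)‖ ^ 2 := by
  intro k
  set J : PiLp 2 (fun _ : Fin N => H0) → PiLp 2 (fun _ : Fin N => H0) :=
    fun y => WithLp.toLp 2 fun j => softThreshold τ (y j)
  have hJ : ∀ y, IsProx (fun z : PiLp 2 (fun _ : Fin N => H0) => τ * ∑ j, ‖z j‖) y (J y) := by
    intro y
    simpa only [Finset.mul_sum] using
      IsProx.piLp (a := y) (p := J y) fun j => isProx_softThreshold hτ0.le (y j)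
  have hfix : xs = J (G xs) := by
    refine IsProx.unique (isProx_of_inner_le fun z => ?_) (hJ _)
    have hsub := inner_adjoint_residual_le_of_forall_le A u
      (convexOn_piLp_sum fun _ => convexOn_norm convex_univ) hmin z
    rw [hG, sub_sub_cancel_left, ← smul_neg, ← map_neg, neg_sub, real_inner_smul_left, ← mul_sub]
    exact mul_le_mul_of_nonneg_left hsub hτ0.le
  have hstep : x (k + 1) = J (G (x k)) := by
    ext j
    exact hiter k j
  have hdiff : G (x k) - G xs = (x k - xs) - τ • (A† ∘L A) (x k - xs) := by
    simp only [hG, ContinuousLinearMap.comp_apply, map_sub, smul_sub]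
    abel
  have hproj : ∀ a b, ‖(a - J a) - (b - J b)‖ ^ 2 = ∑ j, ‖P (a j) - P (b j)‖ ^ 2 := by
    intro a b
    rw [PiLp.norm_sq_eq_of_L2]
    refine Finset.sum_congr rfl fun j _ => ?_
    rw [hP, hP, ← sub_softThreshold, ← sub_softThreshold]
    rfl
  have hfirm := (hJ (G (x k))).norm_sub_sq_add_norm_sub_sq_le (hJ (G xs))
  have hnonexp := pow_le_pow_left₀ (norm_nonneg _)
    (norm_sub_smul_adjoint_comp_self_apply_le A hτ0.le hτ2.le (x k - xs)) 2
  rw [hproj, hdiff, ← hstep, ← hfix] at hfirm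
  linarith
end

section
/- Under Assumption (0 < τ < 2/‖A*A‖), for iterates x^{k+1} = J_τ ∘ G_τ(x^k) and any minimizer x*, the quantities c̄^k := Σ_{j∈[N]} ‖P_τ(G_τ(x^k)_j) − P_τ(G_τ(x*)_j)‖₂² satisfy Σ_{k=0}^∞ c̄^k ≤ ‖x^0 − x*‖², and hence P_τ(G_τ(x^k)_j) → P_τ(G_τ(x*)_j) strongly in ℓ²(Ω) for every j ∈ [N]. -/
/-!
A minimiser `x*` is a fixed point of `J_τ ∘ G_τ`: both `x*` and `J_τ (G_τ x*)` satisfy the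
subgradient inequality of `τ ∑ⱼ ‖·ⱼ‖` at `G_τ x*`, and two such points coincide by monotonicity.
Row-wise, soft thresholding is `S = id - P_τ`, so it is firmly nonexpansive:
`‖S z - S w‖² + ‖P_τ z - P_τ w‖² ≤ ‖z - w‖²`. Since `G_τ` is nonexpansive for `τ ‖A*A‖ ≤ 2`,
this gives `‖x^{k+1} - x*‖² + c̄^k ≤ ‖x^k - x*‖²`, which telescopes.
-/

open Filter

variable {H0 K : Type*} [NormedAddCommGroup H0] [InnerProductSpace ℝ H0] [CompleteSpace H0]
  [NormedAddCommGroup K] [InnerProductSpace ℝ K] [CompleteSpace K]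

open Set Topology RealInnerProductSpace
open scoped InnerProduct

section InnerProductSpace

variable {E V : Type*} [NormedAddCommGroup E] [InnerProductSpace ℝ E]
  [NormedAddCommGroup V] [InnerProductSpace ℝ V]

theorem norm_sub_sq_add_norm_sub_sq_le_of_inner_nonpos {z w p q : E}
    (hp : ⟪z - p, q - p⟫ ≤ 0) (hq : ⟪w - q, p - q⟫ ≤ 0) :
    ‖(z - p) - (w - q)‖ ^ 2 + ‖p - q‖ ^ 2 ≤ ‖z - w‖ ^ 2 := by
  have hcross : ⟪(z - p) - (w - q), p - q⟫ = -⟪z - p, q - p⟫ - ⟪w - q, p - q⟫ := by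
    rw [inner_sub_left, ← neg_sub q p, inner_neg_right]
  have hsplit : z - w = ((z - p) - (w - q)) + (p - q) := by abel
  rw [hsplit, norm_add_sq_real, hcross]
  linarith

theorem eq_of_forall_add_inner_le (φ : E → ℝ) {z p q : E}
    (hp : ∀ v, φ p + ⟪z - p, v - p⟫ ≤ φ v) (hq : ∀ v, φ q + ⟪z - q, v - q⟫ ≤ φ v) :
    p = q := by
  have hsum : ⟪z - p, q - p⟫ + ⟪z - q, p - q⟫ = ‖p - q‖ ^ 2 := by
    rw [← neg_sub p q, inner_neg_right, neg_add_eq_sub, ← inner_sub_left,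
      sub_sub_sub_cancel_left, real_inner_self_eq_norm_sq]
  have hle : ‖p - q‖ ^ 2 ≤ 0 := by linarith [hp q, hq p]
  rw [← sub_eq_zero, ← norm_eq_zero]
  exact pow_eq_zero_iff two_ne_zero |>.mp (le_antisymm hle (sq_nonneg _))

theorem le_of_forall_le_add_mul {a b c : ℝ} (h : ∀ t ∈ Ioc (0 : ℝ) 1, a ≤ b + t * c) :
    a ≤ b := by
  have hcont : Continuous fun t : ℝ => b + t * c := by fun_prop
  have hlim : Tendsto (fun t : ℝ => b + t * c) (𝓝[>] 0) (𝓝 b) :=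
    (hcont.tendsto' 0 b (by simp)).mono_left nhdsWithin_le_nhds
  exact ge_of_tendsto hlim (eventually_of_mem (Ioc_mem_nhdsGT one_pos) h)

theorem ConvexOn.le_add_inner_of_isMinOn {φ : E → ℝ} (hφ : ConvexOn ℝ univ φ)
    (A : E →L[ℝ] V) (u : V) {xs : E}
    (hmin : IsMinOn (fun y => φ y + ‖A y - u‖ ^ 2 / 2) univ xs) (y : E) :
    φ xs ≤ φ y + ⟪A xs - u, A (y - xs)⟫ := by
  refine le_of_forall_le_add_mul (c := ‖A (y - xs)‖ ^ 2 / 2) fun t ⟨ht0, ht1⟩ => ?_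
  have hconv : φ (xs + t • (y - xs)) ≤ (1 - t) * φ xs + t * φ y := by
    have := hφ.2 (mem_univ xs) (mem_univ y) (sub_nonneg.2 ht1) ht0.le (sub_add_cancel 1 t)
    rwa [smul_eq_mul, smul_eq_mul, ← show xs + t • (y - xs) = (1 - t) • xs + t • y by module]
      at this
  have hquad : ‖A (xs + t • (y - xs)) - u‖ ^ 2
      = ‖A xs - u‖ ^ 2 + 2 * t * ⟪A xs - u, A (y - xs)⟫ + t ^ 2 * ‖A (y - xs)‖ ^ 2 := by
    rw [map_add, map_smul, add_sub_right_comm, norm_add_sq_real, inner_smul_right, norm_smul,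
      Real.norm_eq_abs, abs_of_pos ht0]
    ring
  have hm : φ xs + ‖A xs - u‖ ^ 2 / 2 ≤ φ (xs + t • (y - xs)) + _ := hmin (mem_univ _)
  rw [hquad] at hm
  have hscaled :
      t * φ xs ≤ t * (φ y + ⟪A xs - u, A (y - xs)⟫ + t * (‖A (y - xs)‖ ^ 2 / 2)) := by
    nlinarith
  exact le_of_mul_le_mul_left hscaled ht0

variable [CompleteSpace E] [CompleteSpace V]

theorem norm_sub_smul_adjoint_apply_le (A : E →L[ℝ] V) {τ : ℝ} (hτ : 0 ≤ τ)
    (hτA : τ * ‖A† ∘L A‖ ≤ 2) (d : E) : ‖d - τ • (A†) (A d)‖ ≤ ‖d‖ := by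
  rw [ContinuousLinearMap.norm_adjoint_comp_self] at hτA
  have hbound : ‖(A†) (A d)‖ ≤ ‖A‖ * ‖A d‖ := by
    simpa only [LinearIsometryEquiv.norm_map] using (A†).le_opNorm (A d)
  have hsq : ‖d - τ • (A†) (A d)‖ ^ 2
      = ‖d‖ ^ 2 - 2 * τ * ‖A d‖ ^ 2 + τ ^ 2 * ‖(A†) (A d)‖ ^ 2 := by
    rw [norm_sub_sq_real, inner_smul_right, ContinuousLinearMap.adjoint_inner_right,
      real_inner_self_eq_norm_sq, norm_smul, Real.norm_eq_abs, mul_pow, sq_abs]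
    ring
  have hquad : τ ^ 2 * ‖(A†) (A d)‖ ^ 2 ≤ 2 * τ * ‖A d‖ ^ 2 :=
    calc τ ^ 2 * ‖(A†) (A d)‖ ^ 2 ≤ τ ^ 2 * (‖A‖ * ‖A d‖) ^ 2 := by gcongr
      _ = τ * (τ * (‖A‖ * ‖A‖)) * ‖A d‖ ^ 2 := by ring
      _ ≤ τ * 2 * ‖A d‖ ^ 2 := by gcongr
      _ = 2 * τ * ‖A d‖ ^ 2 := by ring
  refine (sq_le_sq₀ (norm_nonneg _) (norm_nonneg _)).mp ?_
  linarith

end InnerProductSpace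

section Shrinkage

variable {F : Type*} [NormedAddCommGroup F] [InnerProductSpace ℝ F]

noncomputable def ballProj (τ : ℝ) (z : F) : F := if ‖z‖ ≤ τ then z else (τ / ‖z‖) • z

noncomputable def softShrink (τ : ℝ) (z : F) : F := (max (‖z‖ - τ) 0 / ‖z‖) • z

theorem softShrink_of_norm_le {τ : ℝ} {z : F} (h : ‖z‖ ≤ τ) : softShrink τ z = 0 := by
  simp [softShrink, max_eq_right (sub_nonpos.2 h)]

theorem softShrink_add_ballProj (τ : ℝ) (z : F) : softShrink τ z + ballProj τ z = z := by
  by_cases h : ‖z‖ ≤ τ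
  · simp [softShrink_of_norm_le h, ballProj, h]
  rcases eq_or_ne z 0 with rfl | hz
  · simp [softShrink, ballProj]
  have hz' : ‖z‖ ≠ 0 := norm_ne_zero_iff.2 hz
  rw [softShrink, ballProj, if_neg h, max_eq_left (by linarith), ← add_smul, ← add_div,
    sub_add_cancel, div_self hz', one_smul]

theorem norm_ballProj_le {τ : ℝ} (hτ : 0 ≤ τ) (z : F) : ‖ballProj τ z‖ ≤ τ := by
  unfold ballProj
  split_ifs with h
  · exact h
  · rw [norm_smul, Real.norm_eq_abs, abs_div, abs_norm, abs_of_nonneg hτ,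
      div_mul_cancel₀ _ (by linarith [norm_nonneg z])]

theorem inner_ballProj_softShrink (τ : ℝ) (z : F) :
    ⟪ballProj τ z, softShrink τ z⟫ = τ * ‖softShrink τ z‖ := by
  by_cases h : ‖z‖ ≤ τ
  · simp [softShrink_of_norm_le h]
  rcases eq_or_ne z 0 with rfl | hz
  · simp [softShrink]
  have hz' : 0 < ‖z‖ := norm_pos_iff.2 hz
  have hc : 0 ≤ (‖z‖ - τ) / ‖z‖ := div_nonneg (by linarith) hz'.le
  rw [softShrink, ballProj, if_neg h, max_eq_left (by linarith), inner_smul_left,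
    inner_smul_right, real_inner_self_eq_norm_sq, norm_smul, Real.norm_eq_abs, abs_of_nonneg hc]
  simp only [conj_trivial]
  field_simp

theorem inner_sub_ballProj_nonpos {τ : ℝ} (z : F) {v : F} (hv : ‖v‖ ≤ τ) :
    ⟪z - ballProj τ z, v - ballProj τ z⟫ ≤ 0 := by
  have hz := softShrink_add_ballProj τ z
  rw [← eq_sub_of_add_eq hz, inner_sub_right, real_inner_comm (ballProj τ z),
    inner_ballProj_softShrink]
  calc ⟪softShrink τ z, v⟫ - τ * ‖softShrink τ z‖
      ≤ ‖softShrink τ z‖ * ‖v‖ - ‖softShrink τ z‖ * τ := by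
        rw [mul_comm τ]; exact sub_le_sub_right (real_inner_le_norm _ _) _
    _ ≤ 0 := by nlinarith [norm_nonneg (softShrink τ z)]

/-- `softShrink τ z` is the proximal point of `τ ‖·‖` at `z`, in subgradient form. -/
theorem softShrink_add_inner_le {τ : ℝ} (hτ : 0 ≤ τ) (z v : F) :
    τ * ‖softShrink τ z‖ + ⟪z - softShrink τ z, v - softShrink τ z⟫ ≤ τ * ‖v‖ := by
  rw [← eq_sub_of_add_eq' (softShrink_add_ballProj τ z), inner_sub_right,
    inner_ballProj_softShrink]
  calc τ * ‖softShrink τ z‖ + (⟪ballProj τ z, v⟫ - τ * ‖softShrink τ z‖)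
      = ⟪ballProj τ z, v⟫ := by ring
    _ ≤ ‖ballProj τ z‖ * ‖v‖ := real_inner_le_norm _ _
    _ ≤ τ * ‖v‖ := by gcongr; exact norm_ballProj_le hτ z

theorem norm_softShrink_sub_sq_add_norm_ballProj_sub_sq_le {τ : ℝ} (hτ : 0 ≤ τ) (z w : F) :
    ‖softShrink τ z - softShrink τ w‖ ^ 2 + ‖ballProj τ z - ballProj τ w‖ ^ 2 ≤ ‖z - w‖ ^ 2 := by
  have h := norm_sub_sq_add_norm_sub_sq_le_of_inner_nonpos
    (inner_sub_ballProj_nonpos z (norm_ballProj_le hτ w))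
    (inner_sub_ballProj_nonpos w (norm_ballProj_le hτ z))
  rwa [← eq_sub_of_add_eq (softShrink_add_ballProj τ z),
    ← eq_sub_of_add_eq (softShrink_add_ballProj τ w)] at h

end Shrinkage

section RowShrinkage

variable {ι F : Type*} [NormedAddCommGroup F] [InnerProductSpace ℝ F]

noncomputable def rowShrink (τ : ℝ) (y : PiLp 2 fun _ : ι => F) : PiLp 2 fun _ : ι => F :=
  WithLp.toLp 2 fun j => softShrink τ (y j)

@[simp]
theorem rowShrink_apply (τ : ℝ) (y : PiLp 2 fun _ : ι => F) (j : ι) :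
    rowShrink τ y j = softShrink τ (y j) :=
  rfl

variable [Fintype ι]

theorem convexOn_sum_norm_apply :
    ConvexOn ℝ univ fun y : PiLp 2 (fun _ : ι => F) => ∑ j, ‖y j‖ := by
  have h : ConvexOn ℝ univ (∑ j, fun y : PiLp 2 (fun _ : ι => F) => ‖y j‖) :=
    Finset.sum_induction _ (ConvexOn ℝ univ) (fun _ _ => ConvexOn.add)
      (convexOn_const 0 convex_univ)
      fun j _ => (convexOn_norm convex_univ).comp_linearMap
        (PiLp.projₗ 2 (𝕜 := ℝ) (fun _ : ι => F) j)
  simpa only [Finset.sum_fn] using h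

theorem rowShrink_add_inner_le {τ : ℝ} (hτ : 0 ≤ τ) (z v : PiLp 2 fun _ : ι => F) :
    τ * ∑ j, ‖rowShrink τ z j‖ + ⟪z - rowShrink τ z, v - rowShrink τ z⟫ ≤ τ * ∑ j, ‖v j‖ := by
  simp only [PiLp.inner_apply, PiLp.sub_apply, rowShrink_apply, Finset.mul_sum,
    ← Finset.sum_add_distrib]
  exact Finset.sum_le_sum fun j _ => softShrink_add_inner_le hτ (z j) (v j)

theorem norm_rowShrink_sub_sq_add_sum_le {τ : ℝ} (hτ : 0 ≤ τ) (y y' : PiLp 2 fun _ : ι => F) :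
    ‖rowShrink τ y - rowShrink τ y'‖ ^ 2 + ∑ j, ‖ballProj τ (y j) - ballProj τ (y' j)‖ ^ 2
      ≤ ‖y - y'‖ ^ 2 := by
  simp only [PiLp.norm_sq_eq_of_L2, PiLp.sub_apply, rowShrink_apply, ← Finset.sum_add_distrib]
  exact Finset.sum_le_sum fun j _ =>
    norm_softShrink_sub_sq_add_norm_ballProj_sub_sq_le hτ (y j) (y' j)

theorem eq_rowShrink_of_isMinOn [CompleteSpace F] {V : Type*} [NormedAddCommGroup V]
    [InnerProductSpace ℝ V] [CompleteSpace V] {τ : ℝ} (hτ : 0 ≤ τ)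
    (A : (PiLp 2 fun _ : ι => F) →L[ℝ] V) (u : V) {xs : PiLp 2 fun _ : ι => F}
    (hmin : IsMinOn (fun y => ∑ j, ‖y j‖ + ‖A y - u‖ ^ 2 / 2) univ xs) :
    xs = rowShrink τ (xs - τ • (A†) (A xs - u)) := by
  refine eq_of_forall_add_inner_le (fun y => τ * ∑ j, ‖y j‖) (fun v => ?_)
    (rowShrink_add_inner_le hτ _)
  have hfo := convexOn_sum_norm_apply.le_add_inner_of_isMinOn A u hmin v
  rw [← ContinuousLinearMap.adjoint_inner_left] at hfo
  rw [sub_sub_cancel_left, inner_neg_left, inner_smul_left]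
  simp only [conj_trivial]
  linarith [mul_le_mul_of_nonneg_left hfo hτ]

end RowShrinkage

theorem summable_and_tsum_le_of_add_le {a c : ℕ → ℝ} (ha : ∀ k, 0 ≤ a k) (hc : ∀ k, 0 ≤ c k)
    (h : ∀ k, a (k + 1) + c k ≤ a k) : Summable c ∧ ∑' k, c k ≤ a 0 := by
  have hpartial : ∀ n, ∑ k ∈ Finset.range n, c k + a n ≤ a 0 := by
    intro n
    induction n with
    | zero => simp
    | succ n ih => rw [Finset.sum_range_succ]; linarith [h n]
  have hbound : ∀ n, ∑ k ∈ Finset.range n, c k ≤ a 0 := fun n => by linarith [hpartial n, ha n]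
  have hsum := summable_of_sum_range_le hc hbound
  exact ⟨hsum, hsum.tsum_le_of_sum_range_le hbound⟩

theorem tendsto_of_summable_sum_norm_sub_sq {ι F : Type*} [Fintype ι] [SeminormedAddCommGroup F]
    {f : ℕ → ι → F} {g : ι → F} (h : Summable fun k => ∑ j, ‖f k j - g j‖ ^ 2) (j : ι) :
    Tendsto (fun k => f k j) atTop (𝓝 (g j)) := by
  have hsqrt : Tendsto (fun k => √(∑ j, ‖f k j - g j‖ ^ 2)) atTop (𝓝 0) := by
    simpa [Function.comp_def] using (Real.continuous_sqrt.tendsto 0).comp h.tendsto_atTop_zero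
  refine tendsto_iff_norm_sub_tendsto_zero.2 (squeeze_zero (fun _ => norm_nonneg _) (fun k => ?_)
    hsqrt)
  rw [← abs_norm]
  exact Real.abs_le_sqrt (Finset.single_le_sum (f := fun i => ‖f k i - g i‖ ^ 2)
    (fun _ _ => sq_nonneg _) (Finset.mem_univ j))

/-- Summability of `c̄^k = Σ_j ‖P_τ(G_τ(x^k)_j) - P_τ(G_τ(x*)_j)‖²` with
`Σ_k c̄^k ≤ ‖x⁰ - x*‖²`, hence strong row-wise convergence of the projected
gradient steps. -/
theorem stmt_10 {N : ℕ} (A : PiLp 2 (fun _ : Fin N => H0) →L[ℝ] K) (u : K)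
    (τ : ℝ) (hτ0 : 0 < τ) (hτ2 : τ * ‖(ContinuousLinearMap.adjoint A).comp A‖ < 2)
    (xs : PiLp 2 (fun _ : Fin N => H0))
    (hmin : ∀ y : PiLp 2 (fun _ : Fin N => H0),
      (∑ j, ‖xs j‖) + ‖A xs - u‖ ^ 2 / 2 ≤ (∑ j, ‖y j‖) + ‖A y - u‖ ^ 2 / 2)
    (G : PiLp 2 (fun _ : Fin N => H0) → PiLp 2 (fun _ : Fin N => H0))
    (hG : ∀ y, G y = y - τ • (ContinuousLinearMap.adjoint A) (A y - u))
    (P : H0 → H0)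
    (hP : ∀ z : H0, P z = if ‖z‖ ≤ τ then z else (τ / ‖z‖) • z)
    (x : ℕ → PiLp 2 (fun _ : Fin N => H0))
    (hiter : ∀ (k : ℕ) (j : Fin N),
      x (k + 1) j = (max (‖G (x k) j‖ - τ) 0 / ‖G (x k) j‖) • G (x k) j) :
    Summable (fun k : ℕ => ∑ j, ‖P (G (x k) j) - P (G xs j)‖ ^ 2) ∧
      (∑' k : ℕ, ∑ j, ‖P (G (x k) j) - P (G xs j)‖ ^ 2) ≤ ‖x 0 - xs‖ ^ 2 ∧
      ∀ j : Fin N, Tendsto (fun k : ℕ => P (G (x k) j)) atTop (nhds (P (G xs j))) := by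
  obtain rfl : P = ballProj τ := funext hP
  have hfix : xs = rowShrink τ (G xs) := by
    rw [hG]; exact eq_rowShrink_of_isMinOn hτ0.le A u (isMinOn_univ_iff.2 hmin)
  have hstep (k : ℕ) : x (k + 1) = rowShrink τ (G (x k)) := PiLp.ext (hiter k)
  have hG_le (y y' : PiLp 2 fun _ : Fin N => H0) : ‖G y - G y'‖ ≤ ‖y - y'‖ := by
    have hdiff : G y - G y' = (y - y') - τ • (A†) (A (y - y')) := by
      simp only [hG, map_sub]; module
    rw [hdiff]
    exact norm_sub_smul_adjoint_apply_le A hτ0.le hτ2.le _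
  have hdesc (k : ℕ) :
      ‖x (k + 1) - xs‖ ^ 2 + ∑ j, ‖ballProj τ (G (x k) j) - ballProj τ (G xs j)‖ ^ 2
        ≤ ‖x k - xs‖ ^ 2 :=
    calc _ = ‖rowShrink τ (G (x k)) - rowShrink τ (G xs)‖ ^ 2
          + ∑ j, ‖ballProj τ (G (x k) j) - ballProj τ (G xs j)‖ ^ 2 := by rw [← hstep k, ← hfix]
      _ ≤ ‖G (x k) - G xs‖ ^ 2 := norm_rowShrink_sub_sq_add_sum_le hτ0.le _ _
      _ ≤ ‖x k - xs‖ ^ 2 := by gcongr; exact hG_le _ _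
  obtain ⟨hsum, htsum⟩ := summable_and_tsum_le_of_add_le (a := fun k => ‖x k - xs‖ ^ 2)
    (fun _ => sq_nonneg _) (fun _ => Finset.sum_nonneg fun _ _ => sq_nonneg _) hdesc
  exact ⟨hsum, htsum, tendsto_of_summable_sum_norm_sub_sq hsum⟩
end

section
/- Under Assumption (0 < τ < 2/‖A*A‖), let x^{k+1} = J_τ ∘ G_τ(x^k) with x^0 ∈ H arbitrary, and suppose x^k converges weakly to a minimizer x* of φ₁ + φ₂. Then for each j ∈ supp(x*), the angle between x^k_j and x*_j tends to 0 as k → ∞. -/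
/-!
At a minimizer, Fermat's rule along the block `j` gives `(A*(A x* - u))_j = -x*_j / ‖x*_j‖`
whenever `x*_j ≠ 0`, so the gradient step maps `x*_j` to `(1 + τ/‖x*_j‖) x*_j`. Since `G_τ` is a
continuous affine map, `G_τ(x^k)` converges weakly to `G_τ(x*)`; pairing the `j`-th blocks with
`x*_j` gives `⟪x^k_j, x*_j⟫ → ‖x*_j‖²` and `⟪G_τ(x^k)_j, x*_j⟫ → (‖x*_j‖ + τ) ‖x*_j‖`. The ratio
of the two is the shrinkage factor `1 - τ/‖G_τ(x^k)_j‖`, which therefore tends to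
`‖x*_j‖ / (‖x*_j‖ + τ)`; hence `‖x^{k+1}_j‖ = ‖G_τ(x^k)_j‖ - τ → ‖x*_j‖`, and weak convergence
together with convergence of the norms forces the cosine of the angle to `1`.
-/

open Filter
open scoped RealInnerProductSpace

variable {H0 K : Type*} [NormedAddCommGroup H0] [InnerProductSpace ℝ H0] [CompleteSpace H0]
  [NormedAddCommGroup K] [InnerProductSpace ℝ K] [CompleteSpace K]

open Topology InnerProductGeometry

section PiLp

variable {ι 𝕜 : Type*} [RCLike 𝕜] [Fintype ι] [DecidableEq ι] {β : ι → Type*}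
  [∀ i, NormedAddCommGroup (β i)] [∀ i, InnerProductSpace 𝕜 (β i)]

theorem PiLp.inner_single_right (x : PiLp 2 β) (i : ι) (a : β i) :
    inner 𝕜 x (PiLp.single 2 i a) = inner 𝕜 (x i) a := by
  rw [PiLp.inner_apply, Finset.sum_eq_single i]
  · simp
  · intro k _ hk; simp [Pi.single_eq_of_ne hk]
  · simp

theorem PiLp.sum_norm_add_single {E : Type*} [NormedAddCommGroup E]
    (x : PiLp 2 (fun _ : ι => E)) (j : ι) (b : E) :
    ∑ i, ‖(x + PiLp.single 2 (β := fun _ : ι => E) j b) i‖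
      = ∑ i, ‖x i‖ + (‖x j + b‖ - ‖x j‖) := by
  rw [← sub_eq_iff_eq_add', ← Finset.sum_sub_distrib, Finset.sum_eq_single j]
  · simp
  · intro i _ hi; simp [hi]
  · simp

end PiLp

variable {E : Type*} [NormedAddCommGroup E] [InnerProductSpace ℝ E]

theorem hasDerivAt_add_smul (a v : E) (t₀ : ℝ) : HasDerivAt (fun t : ℝ => a + t • v) v t₀ := by
  simpa using ((hasDerivAt_id t₀).smul_const v).const_add a

theorem hasDerivAt_norm_add_smul {a : E} (ha : a ≠ 0) (v : E) :
    HasDerivAt (fun t : ℝ => ‖a + t • v‖) (⟪a, v⟫ / ‖a‖) 0 := by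
  have := (hasDerivAt_add_smul a v 0).norm_sq.sqrt (by simpa using ha)
  convert this using 1
  · ext t; simp [Real.sqrt_sq (norm_nonneg _)]
  · simp [Real.sqrt_sq (norm_nonneg _)]; field_simp

theorem hasDerivAt_norm_add_smul_sq_div_two (a v : E) :
    HasDerivAt (fun t : ℝ => ‖a + t • v‖ ^ 2 / 2) ⟪a, v⟫ 0 := by
  simpa using (hasDerivAt_add_smul a v 0).norm_sq.div_const 2

section GroupLasso

variable {ι F : Type*} [Fintype ι] [NormedAddCommGroup F] [InnerProductSpace ℝ F]
  [CompleteSpace E] [CompleteSpace F]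

theorem adjoint_residual_apply_eq_of_isMin (A : PiLp 2 (fun _ : ι => E) →L[ℝ] F) (u : F)
    {xs : PiLp 2 (fun _ : ι => E)}
    (hmin : ∀ y : PiLp 2 (fun _ : ι => E),
      (∑ j, ‖xs j‖) + ‖A xs - u‖ ^ 2 / 2 ≤ (∑ j, ‖y j‖) + ‖A y - u‖ ^ 2 / 2)
    {j : ι} (hj : xs j ≠ 0) :
    (ContinuousLinearMap.adjoint A) (A xs - u) j = -‖xs j‖⁻¹ • xs j := by
  classical
  refine ext_inner_right ℝ fun v => ?_
  set e := PiLp.single 2 (β := fun _ : ι => E) j v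
  have hderiv : HasDerivAt (fun t : ℝ => ‖xs j + t • v‖ + ‖(A xs - u) + t • A e‖ ^ 2 / 2)
      (⟪xs j, v⟫ / ‖xs j‖ + ⟪A xs - u, A e⟫) 0 :=
    (hasDerivAt_norm_add_smul hj v).add (hasDerivAt_norm_add_smul_sq_div_two _ _)
  have hlocal : IsLocalMin (fun t : ℝ => ‖xs j + t • v‖ + ‖(A xs - u) + t • A e‖ ^ 2 / 2) 0 := by
    refine Eventually.of_forall fun t => ?_
    have hsmul : PiLp.single 2 j (t • v) = t • e := by
      ext i; by_cases hi : i = j <;> simp [e, hi]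
    have h := hmin (xs + PiLp.single 2 j (t • v))
    rw [PiLp.sum_norm_add_single, hsmul, map_add, map_smul, add_sub_right_comm] at h
    simp only [zero_smul, add_zero]
    linarith
  have hcrit := hlocal.hasDerivAt_eq_zero hderiv
  rw [← ContinuousLinearMap.adjoint_inner_left, PiLp.inner_single_right] at hcrit
  rw [real_inner_smul_left, neg_mul, ← div_eq_inv_mul]
  linarith

end GroupLasso

theorem tendsto_angle_zero_of_tendsto_inner {α : Type*} {l : Filter α} {a : E} (ha : a ≠ 0)
    {y : α → E} (hya : Tendsto (fun k => ⟪y k, a⟫) l (𝓝 (‖a‖ ^ 2)))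
    (hy : Tendsto (fun k => ‖y k‖) l (𝓝 ‖a‖)) :
    Tendsto (fun k => angle (y k) a) l (𝓝 0) := by
  have hcos : Tendsto (fun k => ⟪y k, a⟫ / (‖y k‖ * ‖a‖)) l (𝓝 1) := by
    have ha' : ‖a‖ ≠ 0 := norm_ne_zero_iff.mpr ha
    have h := hya.div (hy.mul_const ‖a‖) (mul_ne_zero ha' ha')
    rwa [← sq, div_self (pow_ne_zero 2 ha')] at h
  have harccos := (Real.continuous_arccos.tendsto 1).comp hcos
  rwa [Real.arccos_one] at harccos

theorem tendsto_softThreshold_factor {a : E} (ha : a ≠ 0) {τ : ℝ} (hτ : 0 < τ) {y g : ℕ → E}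
    (hy : ∀ k, y (k + 1) = (max (‖g k‖ - τ) 0 / ‖g k‖) • g k)
    (hya : Tendsto (fun k => ⟪y k, a⟫) atTop (𝓝 (‖a‖ ^ 2)))
    (hga : Tendsto (fun k => ⟪g k, a⟫) atTop (𝓝 ((‖a‖ + τ) * ‖a‖))) :
    Tendsto (fun k => max (‖g k‖ - τ) 0 / ‖g k‖) atTop (𝓝 (‖a‖ / (‖a‖ + τ))) := by
  have hr : 0 < ‖a‖ := norm_pos_iff.mpr ha
  have hlim := (hya.comp (tendsto_add_atTop_nat 1)).div hga (by positivity)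
  rw [show ‖a‖ ^ 2 / ((‖a‖ + τ) * ‖a‖) = ‖a‖ / (‖a‖ + τ) by field_simp] at hlim
  refine hlim.congr' ?_
  filter_upwards [hga.eventually_ne (by positivity)] with k hk
  simp [hy, real_inner_smul_left, hk]

theorem tendsto_norm_softThreshold {a : E} (ha : a ≠ 0) {τ : ℝ} (hτ : 0 < τ) {y g : ℕ → E}
    (hy : ∀ k, y (k + 1) = (max (‖g k‖ - τ) 0 / ‖g k‖) • g k)
    (hya : Tendsto (fun k => ⟪y k, a⟫) atTop (𝓝 (‖a‖ ^ 2)))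
    (hga : Tendsto (fun k => ⟪g k, a⟫) atTop (𝓝 ((‖a‖ + τ) * ‖a‖))) :
    Tendsto (fun k => ‖y (k + 1)‖) atTop (𝓝 ‖a‖) := by
  have hr : 0 < ‖a‖ := norm_pos_iff.mpr ha
  have hρ := tendsto_softThreshold_factor ha hτ hy hya hga
  have hne : 1 - ‖a‖ / (‖a‖ + τ) ≠ 0 :=
    (sub_pos.mpr ((div_lt_one (by positivity)).mpr (by linarith))).ne'
  have hlim := ((tendsto_const_nhds.sub hρ).inv₀ hne).const_mul τ |>.sub_const τ
  rw [show τ * (1 - ‖a‖ / (‖a‖ + τ))⁻¹ - τ = ‖a‖ by field_simp [hτ.ne']; ring] at hlim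
  refine hlim.congr' ?_
  have hpos : (0 : ℝ) < ‖a‖ / (‖a‖ + τ) := by positivity
  filter_upwards [hρ.eventually (eventually_gt_nhds hpos)] with k hk
  -- once the shrinkage factor `ρ = 1 - τ / ‖g k‖` is positive, `‖g k‖ = τ / (1 - ρ)`
  have hgτ : τ < ‖g k‖ := by
    by_contra! h
    rw [max_eq_right (by linarith)] at hk
    simp at hk
  have hmax : max (‖g k‖ - τ) 0 = ‖g k‖ - τ := max_eq_left (sub_nonneg.mpr hgτ.le)
  have hg0 : ‖g k‖ ≠ 0 := by linarith
  rw [hmax] at hk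
  rw [hy, norm_smul, hmax, Real.norm_of_nonneg hk.le, div_mul_cancel₀ _ hg0]
  field_simp [hτ.ne']
  ring

theorem tendsto_angle_softThreshold {a : E} (ha : a ≠ 0) {τ : ℝ} (hτ : 0 < τ) {y g : ℕ → E}
    (hy : ∀ k, y (k + 1) = (max (‖g k‖ - τ) 0 / ‖g k‖) • g k)
    (hya : Tendsto (fun k => ⟪y k, a⟫) atTop (𝓝 (‖a‖ ^ 2)))
    (hga : Tendsto (fun k => ⟪g k, a⟫) atTop (𝓝 ((‖a‖ + τ) * ‖a‖))) :
    Tendsto (fun k => angle (y k) a) atTop (𝓝 0) :=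
  (tendsto_add_atTop_iff_nat 1).mp <| tendsto_angle_zero_of_tendsto_inner ha
    (hya.comp (tendsto_add_atTop_nat 1)) (tendsto_norm_softThreshold ha hτ hy hya hga)

section WeakConvergence

variable {F : Type*} [NormedAddCommGroup F] [InnerProductSpace ℝ F] {α : Type*} {l : Filter α}

theorem tendsto_inner_map_of_forall_tendsto_inner [CompleteSpace E] [CompleteSpace F]
    (T : E →L[ℝ] F) {x : α → E} {x₀ : E}
    (hx : ∀ y, Tendsto (fun k => ⟪x k, y⟫) l (𝓝 ⟪x₀, y⟫)) (z : F) :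
    Tendsto (fun k => ⟪T (x k), z⟫) l (𝓝 ⟪T x₀, z⟫) := by
  simpa only [ContinuousLinearMap.adjoint_inner_right] using hx (ContinuousLinearMap.adjoint T z)

theorem PiLp.tendsto_inner_apply_of_forall_tendsto_inner {ι : Type*} [Fintype ι] [DecidableEq ι]
    {x : α → PiLp 2 (fun _ : ι => E)} {x₀ : PiLp 2 (fun _ : ι => E)}
    (hx : ∀ y, Tendsto (fun k => ⟪x k, y⟫) l (𝓝 ⟪x₀, y⟫)) (j : ι) (b : E) :
    Tendsto (fun k => ⟪x k j, b⟫) l (𝓝 ⟪x₀ j, b⟫) := by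
  simpa only [PiLp.inner_single_right] using hx (PiLp.single 2 j b)

end WeakConvergence

theorem stmt_15_general {N : ℕ} (A : PiLp 2 (fun _ : Fin N => H0) →L[ℝ] K) (u : K)
    (τ : ℝ) (hτ0 : 0 < τ)
    (G : PiLp 2 (fun _ : Fin N => H0) → PiLp 2 (fun _ : Fin N => H0))
    (hG : ∀ y, G y = y - τ • (ContinuousLinearMap.adjoint A) (A y - u))
    (xs : PiLp 2 (fun _ : Fin N => H0))
    (hmin : ∀ y : PiLp 2 (fun _ : Fin N => H0),
      (∑ j, ‖xs j‖) + ‖A xs - u‖ ^ 2 / 2 ≤ (∑ j, ‖y j‖) + ‖A y - u‖ ^ 2 / 2)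
    (x : ℕ → PiLp 2 (fun _ : Fin N => H0))
    (hiter : ∀ (k : ℕ) (j : Fin N),
      x (k + 1) j = (max (‖G (x k) j‖ - τ) 0 / ‖G (x k) j‖) • G (x k) j)
    (hweak : ∀ y : PiLp 2 (fun _ : Fin N => H0),
      Tendsto (fun k => ⟪x k, y⟫) atTop (nhds ⟪xs, y⟫)) :
    ∀ j : Fin N, xs j ≠ 0 →
      Tendsto (fun k => InnerProductGeometry.angle (x k j) (xs j)) atTop (nhds 0) := by
  intro j hj
  set T : PiLp 2 (fun _ : Fin N => H0) →L[ℝ] PiLp 2 (fun _ : Fin N => H0) :=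
    1 - τ • (ContinuousLinearMap.adjoint A).comp A
  have hG_affine : ∀ y, G y = T y + τ • ContinuousLinearMap.adjoint A u := by
    intro y
    simp only [hG, T, map_sub, smul_sub, sub_apply, one_apply_eq_self, smul_apply,
      ContinuousLinearMap.comp_apply]
    abel
  have hweakG : ∀ z, Tendsto (fun k => ⟪G (x k), z⟫) atTop (𝓝 ⟪G xs, z⟫) := by
    intro z
    simp only [hG_affine, inner_add_left]
    exact (tendsto_inner_map_of_forall_tendsto_inner T hweak z).add_const _
  have hGxs : ⟪G xs j, xs j⟫ = (‖xs j‖ + τ) * ‖xs j‖ := by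
    rw [hG, PiLp.sub_apply, PiLp.smul_apply, adjoint_residual_apply_eq_of_isMin A u hmin hj,
      inner_sub_left, real_inner_smul_left, real_inner_smul_left, real_inner_self_eq_norm_sq]
    field_simp [norm_ne_zero_iff.mpr hj]
    ring
  refine tendsto_angle_softThreshold hj hτ0 (hiter · j) ?_ ?_
  · simpa only [real_inner_self_eq_norm_sq] using
      PiLp.tendsto_inner_apply_of_forall_tendsto_inner hweak j (xs j)
  · rw [← hGxs]
    exact PiLp.tendsto_inner_apply_of_forall_tendsto_inner hweakG j (xs j)

/-- Angular convergence on the support: if the forward–backward iterates converge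
weakly to a minimizer `x*`, then for each `j ∈ supp(x*)` the angle between
`x^k_j` and `x*_j` tends to `0`. -/
theorem stmt_15 {N : ℕ} (A : PiLp 2 (fun _ : Fin N => H0) →L[ℝ] K) (u : K)
    (τ : ℝ) (hτ0 : 0 < τ) (hτ2 : τ * ‖(ContinuousLinearMap.adjoint A).comp A‖ < 2)
    (G : PiLp 2 (fun _ : Fin N => H0) → PiLp 2 (fun _ : Fin N => H0))
    (hG : ∀ y, G y = y - τ • (ContinuousLinearMap.adjoint A) (A y - u))
    (xs : PiLp 2 (fun _ : Fin N => H0))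
    (hmin : ∀ y : PiLp 2 (fun _ : Fin N => H0),
      (∑ j, ‖xs j‖) + ‖A xs - u‖ ^ 2 / 2 ≤ (∑ j, ‖y j‖) + ‖A y - u‖ ^ 2 / 2)
    (x : ℕ → PiLp 2 (fun _ : Fin N => H0))
    (hiter : ∀ (k : ℕ) (j : Fin N),
      x (k + 1) j = (max (‖G (x k) j‖ - τ) 0 / ‖G (x k) j‖) • G (x k) j)
    (hweak : ∀ y : PiLp 2 (fun _ : Fin N => H0),
      Tendsto (fun k => ⟪x k, y⟫) atTop (nhds ⟪xs, y⟫)) :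
    ∀ j : Fin N, xs j ≠ 0 →
      Tendsto (fun k => InnerProductGeometry.angle (x k j) (xs j)) atTop (nhds 0) :=
  stmt_15_general A u τ hτ0 G hG xs hmin x hiter hweak
end
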